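/- Let 𝔒 be an imaginary quadratic order of discriminant Δ with |Δ| < p, let (E, ι) be a primitively 𝔒-oriented supersingular elliptic curve over F̄_p, and let ψ ∈ End(E) be a horizontal endomorphism (i.e., ψ_*(ι) is again a primitive 𝔒-orientation of E) of degree coprime to p. Then there exists α ∈ 𝔒 with ψ = ι(α). -/

import Mathlib

open Quaternion

noncomputable section

variable {c₁ c₂ : ℚ}

/-- Reduced trace on a quaternion algebra over `ℚ`. -/
def trd (x : ℍ[ℚ, c₁, c₂]) : ℚ := 2 * x.re

/-- Reduced norm on a quaternion algebra over `ℚ`. -/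
def nrd (x : ℍ[ℚ, c₁, c₂]) : ℚ := (x * star x).re

/-- `ℍ[ℚ, c₁, c₂]` is the quaternion algebra ramified exactly at `p` and `∞`. -/
def IsBpInfty (p : ℕ) [Fact p.Prime] (c₁ c₂ : ℚ) : Prop :=
  (∀ x : ℍ[ℝ, (c₁ : ℝ), (c₂ : ℝ)], x ≠ 0 → IsUnit x) ∧
  (∀ x : ℍ[ℚ_[p], (c₁ : ℚ_[p]), (c₂ : ℚ_[p])], x ≠ 0 → IsUnit x) ∧
  ∀ (ℓ : ℕ) (hℓ : ℓ.Prime), ℓ ≠ p →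
    ¬ (letI : Fact ℓ.Prime := ⟨hℓ⟩;
       ∀ x : ℍ[ℚ_[ℓ], (c₁ : ℚ_[ℓ]), (c₂ : ℚ_[ℓ])], x ≠ 0 → IsUnit x)

/-- An order in `ℍ[ℚ, c₁, c₂]`: a subring which is a full `ℤ`-lattice. -/
def IsOrder (O : Subring ℍ[ℚ, c₁, c₂]) : Prop :=
  ∃ e : Module.Basis (Fin 4) ℚ ℍ[ℚ, c₁, c₂],
    ∀ x : ℍ[ℚ, c₁, c₂], x ∈ O ↔ ∃ c : Fin 4 → ℤ, x = ∑ i, (c i : ℚ) • e i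

/-- A maximal order. -/
def IsMaximalOrder (O : Subring ℍ[ℚ, c₁, c₂]) : Prop :=
  IsOrder O ∧ ∀ O' : Subring ℍ[ℚ, c₁, c₂], IsOrder O' → O ≤ O' → O' = O

/-- `α ∈ O` defines a primitive (optimal) embedding of the quadratic order `ℤ[α]`:
no element of `O` lying in `ℚ[α]` is outside `ℤ[α]`. -/
def IsPrimitiveEmbedding (O : Subring ℍ[ℚ, c₁, c₂]) (α : ℍ[ℚ, c₁, c₂]) : Prop :=
  α ∈ O ∧ ∀ β ∈ O, (∃ u v : ℚ, β = u • (1 : ℍ[ℚ, c₁, c₂]) + v • α) →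
    ∃ u v : ℤ, β = (u : ℚ) • (1 : ℍ[ℚ, c₁, c₂]) + (v : ℚ) • α

end

/-!
Let `β = ψ_*(α) = ψ α ψ̄ / nrd ψ`: it lies in `O`, has the trace `t` and norm `n` of `α`, and
`ψ α = β ψ`. Put `u = 2α - t`, so that `u² = Δ`. An element `η` anticommuting with `u` has
`p ∣ nrd η`: otherwise `Δ` and `-nrd η` are `p`-adic units with `p` odd, so the quaternion algebra
`(Δ, -nrd η)` they generate splits over `ℚ_p`, which is impossible inside the division algebra
`ℍ[ℚ_p, c₁, c₂]`.

If `α` and `β` do not commute, their commutator `(α - β)(α + β - t)` anticommutes with `u`, and its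
norm is `d₁ d₂` for positive integers `d₁, d₂` with `d₁ + d₂ = -Δ < p`, a contradiction. Hence
`β = α` or `β = ᾱ`. In the second case `ψ` anticommutes with `u`, so `p ∣ nrd ψ`, which is
excluded. In the first, `ψ` commutes with `α`, so `ψ ∈ ℚ(α) ∩ O = ℤ[α]` by primitivity.
-/

section PAdic

open Polynomial

variable {p : ℕ} [Fact p.Prime]

theorem PadicInt.toZMod_eq_zero_iff_norm_lt_one (x : ℤ_[p]) : toZMod x = 0 ↔ ‖x‖ < 1 := by
  rw [← RingHom.mem_ker, ker_toZMod, IsLocalRing.mem_maximalIdeal, mem_nonunits]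

theorem PadicInt.exists_isRoot_of_toZMod_eval {F : ℤ_[p][X]} {a : ℤ_[p]}
    (hroot : toZMod (F.eval a) = 0) (hsimple : toZMod (F.derivative.eval a) ≠ 0) :
    ∃ z, F.IsRoot z := by
  have hder : ‖F.derivative.eval a‖ = 1 :=
    (norm_le_one _).antisymm (not_lt.1 ((toZMod_eq_zero_iff_norm_lt_one _).not.1 hsimple))
  obtain ⟨z, hz, -⟩ := hensels_lemma (F := F) (a := a) (by
    simpa [hder] using (toZMod_eq_zero_iff_norm_lt_one _).1 hroot)
  exact ⟨z, by simpa using hz⟩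

/- Chevalley–Warning gives a solution modulo `p`; it lifts by Hensel in a coordinate whose partial
derivative is a unit. -/
theorem PadicInt.exists_sq_sub_mul_sq_eq (hp : p ≠ 2) {D c : ℤ} (hD : ¬ (p : ℤ) ∣ D)
    (hc : ¬ (p : ℤ) ∣ c) : ∃ x y : ℤ_[p], x ^ 2 - D * y ^ 2 = c := by
  have hDp : (D : ZMod p) ≠ 0 := by rwa [Ne, ZMod.intCast_zmod_eq_zero_iff_dvd]
  have hcp : (c : ZMod p) ≠ 0 := by rwa [Ne, ZMod.intCast_zmod_eq_zero_iff_dvd]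
  have h2p : (2 : ZMod p) ≠ 0 := Ring.two_ne_zero (by rwa [ZMod.ringChar_zmod_n])
  obtain ⟨A, B, hAB⟩ := FiniteField.exists_root_sum_quadratic
    (f := X ^ 2 - C (c : ZMod p)) (g := -C (D : ZMod p) * X ^ 2)
    (by compute_degree!) (by compute_degree!)
    (by rw [ZMod.card]; exact Nat.odd_iff.1 ((Fact.out : p.Prime).odd_of_ne_two hp))
  obtain ⟨a, rfl⟩ := ZMod.ringHom_surjective toZMod A
  obtain ⟨b, rfl⟩ := ZMod.ringHom_surjective toZMod B
  simp only [eval_sub, eval_pow, eval_X, eval_C, eval_mul, eval_neg] at hAB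
  by_cases ha : toZMod a = 0
  · have hb : toZMod b ≠ 0 := by
      rintro hb
      rw [ha, hb] at hAB
      exact hcp (by simpa using hAB)
    obtain ⟨y, hy⟩ := exists_isRoot_of_toZMod_eval (F := C (a ^ 2 - c) - C (D : ℤ_[p]) * X ^ 2)
      (a := b)
      (by
        simp only [map_sub, map_mul, map_pow, map_intCast, eval_sub, eval_mul, eval_pow, eval_C,
          eval_X, eval_intCast]
        linear_combination hAB)
      (by
        rw [derivative_sub, derivative_C, zero_sub]
        simpa [one_add_one_eq_two, map_ofNat] using And.intro hDp (And.intro h2p hb))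
    simp only [IsRoot, eval_sub, eval_mul, eval_C, eval_pow, eval_X] at hy
    exact ⟨a, y, by linear_combination hy⟩
  · obtain ⟨x, hx⟩ := exists_isRoot_of_toZMod_eval (F := X ^ 2 - C (D * b ^ 2 + c : ℤ_[p]))
      (a := a)
      (by
        simp only [map_sub, map_add, map_mul, map_pow, map_intCast, eval_sub, eval_add, eval_mul,
          eval_pow, eval_C, eval_X, eval_intCast]
        linear_combination hAB)
      (by
        rw [derivative_sub, derivative_C, sub_zero]
        simpa [one_add_one_eq_two, map_ofNat] using mul_ne_zero h2p ha)
    simp only [IsRoot, eval_sub, eval_C, eval_pow, eval_X] at hx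
    exact ⟨x, b, by linear_combination hx⟩

theorem Padic.exists_sq_sub_mul_sq_eq (hp : p ≠ 2) {D c : ℤ} (hD : ¬ (p : ℤ) ∣ D)
    (hc : ¬ (p : ℤ) ∣ c) : ∃ x y : ℚ_[p], x ^ 2 - D * y ^ 2 = c := by
  obtain ⟨x, y, hxy⟩ := PadicInt.exists_sq_sub_mul_sq_eq hp hD hc
  refine ⟨x, y, ?_⟩
  have := congrArg ((↑) : ℤ_[p] → ℚ_[p]) hxy
  push_cast at this
  exact this

end PAdic

theorem ne_two_of_discr_lt {p : ℕ} {t n : ℤ} (hneg : t ^ 2 - 4 * n < 0)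
    (hsmall : 4 * n - t ^ 2 < p) : p ≠ 2 := by
  rintro rfl
  rcases Int.even_or_odd' t with ⟨k, rfl | rfl⟩ <;> ring_nf at hneg hsmall <;> omega

theorem not_dvd_of_discr_lt {p : ℕ} {t n : ℤ} (hneg : t ^ 2 - 4 * n < 0)
    (hsmall : 4 * n - t ^ 2 < p) : ¬ (p : ℤ) ∣ t ^ 2 - 4 * n :=
  fun h => absurd (Int.le_of_dvd (by omega) (dvd_neg.2 h)) (by omega)

section QuadraticRelations

variable {R A : Type*} [CommRing R] [Ring A] [Algebra R A] {α β ψ : A} {t n : R}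

theorem mul_sub_mul_eq_sub_mul_add_sub (hα : α * α = t • α - algebraMap R A n)
    (hβ : β * β = t • β - algebraMap R A n) :
    α * β - β * α = (α - β) * (α + β - algebraMap R A t) := by
  rw [Algebra.algebraMap_eq_smul_one] at hα hβ ⊢
  simp only [mul_add, mul_sub, sub_mul, mul_smul_comm, mul_one, hα, hβ]
  module

theorem two_smul_sub_mul_self (hα : α * α = t • α - algebraMap R A n) :
    ((2 : R) • α - algebraMap R A t) * ((2 : R) • α - algebraMap R A t) =
      algebraMap R A (t ^ 2 - 4 * n) := by
  rw [Algebra.algebraMap_eq_smul_one, Algebra.algebraMap_eq_smul_one] at *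
  simp only [mul_sub, sub_mul, mul_smul_comm, smul_mul_assoc, mul_one, one_mul, hα]
  module

theorem mul_sub_mul_anticomm (hα : α * α = t • α - algebraMap R A n) :
    (α * β - β * α) * ((2 : R) • α - algebraMap R A t) =
      -(((2 : R) • α - algebraMap R A t) * (α * β - β * α)) := by
  rw [Algebra.algebraMap_eq_smul_one] at hα ⊢
  have hααβ : α * (α * β) = t • (α * β) - n • β := by
    rw [← mul_assoc, hα, sub_mul, smul_mul_assoc, smul_mul_assoc, one_mul]
  have hβαα : β * (α * α) = t • (β * α) - n • β := by
    rw [hα, mul_sub, mul_smul_comm, mul_smul_comm, mul_one]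
  simp only [mul_sub, sub_mul, mul_smul_comm, smul_mul_assoc, mul_one, one_mul, mul_assoc, hααβ,
    hβαα]
  module

theorem mul_two_smul_sub_anticomm (h : ψ * α = (algebraMap R A t - α) * ψ) :
    ψ * ((2 : R) • α - algebraMap R A t) = -(((2 : R) • α - algebraMap R A t) * ψ) := by
  rw [Algebra.algebraMap_eq_smul_one] at h ⊢
  simp only [mul_sub, sub_mul, mul_smul_comm, smul_mul_assoc, h, one_mul, mul_one]
  module

end QuadraticRelations

/- The quaternion algebra `(D, c)_K` splits as soon as `c` is a norm from `K(√D)`: then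
`w = x + y u + η` satisfies `w (x - y u - η) = 0`. -/
theorem eq_zero_of_anticomm_of_sq_sub_mul_sq_eq {K A : Type*} [Field K] [NeZero (2 : K)] [Ring A]
    [Algebra K A] (hdiv : ∀ x : A, x ≠ 0 → IsUnit x) {u η : A} {D c : K} (hD : D ≠ 0)
    (hu : u * u = algebraMap K A D) (hη : η * η = algebraMap K A c) (hanti : η * u = -(u * η))
    (hsol : ∃ x y : K, x ^ 2 - D * y ^ 2 = c) : η = 0 := by
  obtain ⟨x, y, hxy⟩ := hsol
  rcases subsingleton_or_nontrivial A with hA | hA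
  · exact Subsingleton.elim _ _
  have hu0 : u ≠ 0 := by
    rintro rfl
    exact hD ((algebraMap K A).injective (by rw [← hu, mul_zero, map_zero]))
  rw [Algebra.algebraMap_eq_smul_one] at hu hη
  have hnorm : (x • 1 + y • u + η) * (x • 1 - y • u - η) = (0 : A) := by
    simp only [add_mul, mul_sub, smul_mul_assoc, mul_smul_comm, one_mul, mul_one, smul_smul, hu,
      hη, hanti]
    rw [← hxy]
    module
  have hcomm : u * η = η * u := by
    obtain ⟨a, b, rfl⟩ : ∃ a b : K, η = a • 1 + b • u := by
      by_cases hw : x • 1 + y • u + η = 0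
      · exact ⟨-x, -y, by rw [eq_neg_of_add_eq_zero_right hw]; module⟩
      · have := (hdiv _ hw).mul_right_eq_zero.1 hnorm
        exact ⟨x, -y, by rw [← sub_eq_zero.1 this]; module⟩
    simp only [mul_add, add_mul, smul_mul_assoc, mul_smul_comm, one_mul, mul_one]
  have h2 : (2 : K) • (η * u) = 0 := by
    rw [two_smul]
    nth_rewrite 1 [← hcomm]
    rw [hanti, add_neg_cancel]
  exact (hdiv u hu0).mul_left_eq_zero.1 ((smul_eq_zero.1 h2).resolve_left two_ne_zero)

namespace QuaternionAlgebra

variable {F : Type*} [Field F] {a b : F}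

theorem re_mul_comm (x y : ℍ[F, a, b]) : (x * y).re = (y * x).re := by
  simp only [re_mul]
  ring

theorem not_isSquare_left_of_forall_isUnit (hdiv : ∀ x : ℍ[F, a, b], x ≠ 0 → IsUnit x) :
    ¬ IsSquare a := by
  rintro ⟨s, rfl⟩
  have hzero : (⟨s, -1, 0, 0⟩ : ℍ[F, s * s, b]) * ⟨s, 1, 0, 0⟩ = 0 := by
    ext <;> simp
  have := (hdiv _ fun h => one_ne_zero (congrArg imI h)).mul_left_eq_zero.1 hzero
  simpa using congrArg imI this

theorem not_isSquare_right_of_forall_isUnit (hdiv : ∀ x : ℍ[F, a, b], x ≠ 0 → IsUnit x) :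
    ¬ IsSquare b := by
  rintro ⟨s, rfl⟩
  have hzero : (⟨s, 0, -1, 0⟩ : ℍ[F, a, s * s]) * ⟨s, 0, 1, 0⟩ = 0 := by
    ext <;> simp
  have := (hdiv _ fun h => one_ne_zero (congrArg imJ h)).mul_left_eq_zero.1 hzero
  simpa using congrArg imJ this

theorem re_eq_zero_of_anticomm [NeZero (2 : F)] {u η : ℍ[F, a, b]} {D : F} (hD : D ≠ 0)
    (hu : u * u = D) (hanti : η * u = -(u * η)) : η.re = 0 := by
  have h1 : (η * u * u).re = D * η.re := by
    rw [mul_assoc, hu]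
    simp [mul_comm]
  have h2 : (η * u * u).re = -(η * u * u).re := by
    conv_lhs => rw [hanti, neg_mul, re_neg, mul_assoc, re_mul_comm]
  have h3 : (2 * D) * η.re = 0 := by linear_combination h2 - 2 * h1
  exact (mul_eq_zero.1 h3).resolve_left (mul_ne_zero two_ne_zero hD)

theorem exists_eq_smul_one_add_smul_of_commute [NeZero (2 : F)] (ha : a ≠ 0) (hb : b ≠ 0)
    {x y : ℍ[F, a, b]} (hx : x.im ≠ 0) (h : x * y = y * x) : ∃ u v : F, y = u • 1 + v • x := by
  have hI := congrArg imI h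
  have hJ := congrArg imJ h
  have hK := congrArg imK h
  simp only [imI_mul, imJ_mul, imK_mul] at hI hJ hK
  have eI : x.imJ * y.imK = x.imK * y.imJ :=
    mul_left_cancel₀ (mul_ne_zero two_ne_zero hb) (by linear_combination -hI)
  have eJ : x.imI * y.imK = x.imK * y.imI :=
    mul_left_cancel₀ (mul_ne_zero two_ne_zero ha) (by linear_combination hJ)
  have eK : x.imI * y.imJ = x.imJ * y.imI :=
    mul_left_cancel₀ two_ne_zero (by linear_combination hK)
  obtain ⟨v, hvI, hvJ, hvK⟩ : ∃ v, y.imI = v * x.imI ∧ y.imJ = v * x.imJ ∧ y.imK = v * x.imK := by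
    rcases (show x.imI ≠ 0 ∨ x.imJ ≠ 0 ∨ x.imK ≠ 0 by contrapose! hx; ext <;> simp [hx]) with
      hx | hx | hx
    · refine ⟨y.imI / x.imI, ?_, ?_, ?_⟩ <;> field_simp <;> grind
    · refine ⟨y.imJ / x.imJ, ?_, ?_, ?_⟩ <;> field_simp <;> grind
    · refine ⟨y.imK / x.imK, ?_, ?_, ?_⟩ <;> field_simp <;> grind
  refine ⟨y.re - v * x.re, v, ?_⟩
  ext <;> simp [hvI, hvJ, hvK]

def baseChange (K : Type*) [Field K] [CharZero K] {c₁ c₂ : ℚ} :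
    ℍ[ℚ, c₁, c₂] →ₐ[ℚ] ℍ[K, (c₁ : K), (c₂ : K)] :=
  Basis.liftHom
    { i := ⟨0, 1, 0, 0⟩
      j := ⟨0, 0, 1, 0⟩
      k := ⟨0, 0, 0, 1⟩
      i_mul_i := by ext <;> simp [Rat.smul_def]
      j_mul_j := by ext <;> simp [Rat.smul_def]
      i_mul_j := by ext <;> simp
      j_mul_i := by ext <;> simp }

end QuaternionAlgebra

section RationalQuaternions

variable {c₁ c₂ : ℚ}

theorem nrd_eq (x : ℍ[ℚ, c₁, c₂]) :
    nrd x = x.re ^ 2 - c₁ * x.imI ^ 2 - c₂ * x.imJ ^ 2 + c₁ * c₂ * x.imK ^ 2 := by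
  simp only [nrd, QuaternionAlgebra.re_mul, QuaternionAlgebra.re_star, QuaternionAlgebra.imI_star,
    QuaternionAlgebra.imJ_star, QuaternionAlgebra.imK_star]
  ring

theorem nrd_mul (x y : ℍ[ℚ, c₁, c₂]) : nrd (x * y) = nrd x * nrd y := by
  simp only [nrd_eq, QuaternionAlgebra.re_mul, QuaternionAlgebra.imI_mul,
    QuaternionAlgebra.imJ_mul, QuaternionAlgebra.imK_mul]
  ring

theorem mul_star_eq_nrd (x : ℍ[ℚ, c₁, c₂]) : x * star x = nrd x :=
  QuaternionAlgebra.mul_star_eq_coe x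

theorem star_mul_eq_nrd (x : ℍ[ℚ, c₁, c₂]) : star x * x = nrd x := by
  rw [star_comm_self', mul_star_eq_nrd]

theorem mul_self_eq_trd_smul_sub_nrd (x : ℍ[ℚ, c₁, c₂]) :
    x * x = trd x • x - algebraMap ℚ _ (nrd x) := by
  rw [QuaternionAlgebra.algebraMap_eq]
  ext <;>
    simp only [trd, nrd_eq, QuaternionAlgebra.re_mul, QuaternionAlgebra.imI_mul,
      QuaternionAlgebra.imJ_mul, QuaternionAlgebra.imK_mul, QuaternionAlgebra.re_sub,
      QuaternionAlgebra.imI_sub, QuaternionAlgebra.imJ_sub, QuaternionAlgebra.imK_sub,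
      QuaternionAlgebra.re_smul, QuaternionAlgebra.imI_smul, QuaternionAlgebra.imJ_smul,
      QuaternionAlgebra.imK_smul, smul_eq_mul, zero_mul, add_zero, sub_zero] <;>
    ring

theorem mul_self_eq_neg_nrd {x : ℍ[ℚ, c₁, c₂]} (hx : x.re = 0) :
    x * x = -(nrd x : ℍ[ℚ, c₁, c₂]) := by
  rw [← mul_star_eq_nrd, QuaternionAlgebra.star_eq_neg.2 hx, mul_neg, neg_neg]

theorem im_ne_zero_of_discr_ne_zero {x : ℍ[ℚ, c₁, c₂]} (h : trd x ^ 2 - 4 * nrd x ≠ 0) :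
    x.im ≠ 0 := by
  intro him
  have hI : x.imI = 0 := by simpa using congrArg QuaternionAlgebra.imI him
  have hJ : x.imJ = 0 := by simpa using congrArg QuaternionAlgebra.imJ him
  have hK : x.imK = 0 := by simpa using congrArg QuaternionAlgebra.imK him
  exact h (by rw [trd, nrd_eq, hI, hJ, hK]; ring)

theorem nrd_sub_add_nrd_add_sub {α β : ℍ[ℚ, c₁, c₂]} (ht : trd β = trd α) (hn : nrd β = nrd α) :
    nrd (α - β) + nrd (α + β - algebraMap ℚ _ (trd α)) = 4 * nrd α - trd α ^ 2 := by
  have hre : β.re = α.re := by simpa [trd] using ht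
  rw [nrd_eq, nrd_eq] at hn
  rw [QuaternionAlgebra.algebraMap_eq]
  simp only [nrd_eq, trd, QuaternionAlgebra.re_sub, QuaternionAlgebra.re_add,
    QuaternionAlgebra.imI_sub, QuaternionAlgebra.imI_add, QuaternionAlgebra.imJ_sub,
    QuaternionAlgebra.imJ_add, QuaternionAlgebra.imK_sub, QuaternionAlgebra.imK_add, hre]
  linear_combination 2 * hn - 2 * (α.re + β.re) * hre

theorem nrd_pos (hc₁ : c₁ < 0) (hc₂ : c₂ < 0) {x : ℍ[ℚ, c₁, c₂]} (hx : x ≠ 0) : 0 < nrd x := by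
  have hc := mul_pos_of_neg_of_neg hc₁ hc₂
  rw [nrd_eq]
  rcases (show x.re ≠ 0 ∨ x.imI ≠ 0 ∨ x.imJ ≠ 0 ∨ x.imK ≠ 0 by contrapose! hx; ext <;> simp [hx])
    with h | h | h | h <;>
  nlinarith [sq_pos_of_ne_zero h, sq_nonneg x.re, sq_nonneg x.imI, sq_nonneg x.imJ,
    sq_nonneg x.imK, mul_nonneg hc.le (sq_nonneg x.imK),
    mul_nonneg (neg_nonneg.2 hc₁.le) (sq_nonneg x.imI),
    mul_nonneg (neg_nonneg.2 hc₂.le) (sq_nonneg x.imJ)]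

theorem noZeroDivisors_of_neg (hc₁ : c₁ < 0) (hc₂ : c₂ < 0) : NoZeroDivisors ℍ[ℚ, c₁, c₂] where
  eq_zero_or_eq_zero_of_mul_eq_zero {x y} h := by
    by_contra! hxy
    have := mul_pos (nrd_pos hc₁ hc₂ hxy.1) (nrd_pos hc₁ hc₂ hxy.2)
    rw [← nrd_mul, h, nrd_eq] at this
    simp at this

theorem neg_of_forall_isUnit_real (hdiv : ∀ x : ℍ[ℝ, (c₁ : ℝ), (c₂ : ℝ)], x ≠ 0 → IsUnit x) :
    c₁ < 0 ∧ c₂ < 0 := by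
  constructor
  · exact_mod_cast not_le.1 fun h => QuaternionAlgebra.not_isSquare_left_of_forall_isUnit hdiv
      ⟨√(c₁ : ℝ), (Real.mul_self_sqrt h).symm⟩
  · exact_mod_cast not_le.1 fun h => QuaternionAlgebra.not_isSquare_right_of_forall_isUnit hdiv
      ⟨√(c₂ : ℝ), (Real.mul_self_sqrt h).symm⟩

section Integrality

open Polynomial

theorem IsOrder.isIntegral {O : Subring ℍ[ℚ, c₁, c₂]} (hO : IsOrder O) {x : ℍ[ℚ, c₁, c₂]}
    (hx : x ∈ O) : IsIntegral ℤ x := by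
  obtain ⟨e, he⟩ := hO
  have hspan :
      Subalgebra.toSubmodule (subalgebraOfSubring O) = Submodule.span ℤ (Set.range e) := by
    ext y
    rw [Subalgebra.mem_toSubmodule, Submodule.mem_span_range_iff_exists_fun]
    exact (he y).trans (exists_congr fun c => by simp [eq_comm, Int.cast_smul_eq_zsmul])
  exact IsIntegral.of_mem_of_fg _ (hspan ▸ Submodule.fg_span (Set.finite_range e)) x hx

theorem exists_int_nrd_of_isIntegral {x : ℍ[ℚ, c₁, c₂]} (hx : IsIntegral ℤ x) :
    ∃ N : ℤ, nrd x = N := by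
  by_cases hsc : x ∈ (algebraMap ℚ ℍ[ℚ, c₁, c₂]).range
  · obtain ⟨r, rfl⟩ := hsc
    obtain ⟨k, rfl⟩ := IsIntegrallyClosed.isIntegral_iff.1
      ((isIntegral_algebraMap_iff QuaternionAlgebra.algebraMap_injective).1 hx)
    exact ⟨k ^ 2, by simp [nrd_eq]⟩
  have hQ : IsIntegral ℚ x := hx.tower_top
  have hdeg : (X ^ 2 - C (trd x) * X + C (nrd x)).natDegree = 2 := by compute_degree!
  have hmonic : (X ^ 2 - C (trd x) * X + C (nrd x)).Monic := by monicity!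
  have hroot : aeval x (X ^ 2 - C (trd x) * X + C (nrd x)) = 0 := by
    simp [sq, mul_self_eq_trd_smul_sub_nrd x, Algebra.smul_def]
  have hmin : minpoly ℚ x = X ^ 2 - C (trd x) * X + C (nrd x) :=
    (eq_of_monic_of_dvd_of_natDegree_le (minpoly.monic hQ) hmonic (minpoly.dvd ℚ x hroot)
      (hdeg.trans_le ((minpoly.two_le_natDegree_iff hQ).2 hsc))).symm
  obtain ⟨P, hPmonic, hP⟩ := hx
  obtain ⟨g, hg⟩ := IsIntegrallyClosed.eq_map_mul_C_of_dvd ℚ hPmonic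
    (minpoly.dvd ℚ x (by rw [aeval_map_algebraMap, aeval_def, hP]))
  rw [(minpoly.monic hQ).leadingCoeff, map_one, mul_one, hmin] at hg
  exact ⟨g.coeff 0, by simpa using (congrArg (coeff · 0) hg).symm⟩

end Integrality

def pushforward (ψ α : ℍ[ℚ, c₁, c₂]) : ℍ[ℚ, c₁, c₂] := (nrd ψ)⁻¹ • (ψ * α * star ψ)

theorem mul_eq_pushforward_mul {ψ : ℍ[ℚ, c₁, c₂]} (hψ : nrd ψ ≠ 0) (α : ℍ[ℚ, c₁, c₂]) :
    ψ * α = pushforward ψ α * ψ := by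
  rw [pushforward, smul_mul_assoc, mul_assoc _ (star ψ), star_mul_eq_nrd,
    QuaternionAlgebra.mul_coe_eq_smul, smul_smul, inv_mul_cancel₀ hψ, one_smul]

theorem trd_pushforward {ψ : ℍ[ℚ, c₁, c₂]} (hψ : nrd ψ ≠ 0) (α : ℍ[ℚ, c₁, c₂]) :
    trd (pushforward ψ α) = trd α := by
  have hre : (ψ * α * star ψ).re = nrd ψ * α.re := by
    rw [mul_assoc, QuaternionAlgebra.re_mul_comm, mul_assoc, star_mul_eq_nrd,
      QuaternionAlgebra.mul_coe_eq_smul, QuaternionAlgebra.re_smul, smul_eq_mul]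
  rw [trd, trd, pushforward, QuaternionAlgebra.re_smul, hre, smul_eq_mul,
    inv_mul_cancel_left₀ hψ]

theorem nrd_pushforward {ψ : ℍ[ℚ, c₁, c₂]} (hψ : nrd ψ ≠ 0) (α : ℍ[ℚ, c₁, c₂]) :
    nrd (pushforward ψ α) = nrd α := by
  have := congrArg nrd (mul_eq_pushforward_mul hψ α)
  rw [nrd_mul, nrd_mul, mul_comm] at this
  exact (mul_right_cancel₀ hψ this).symm

theorem dvd_nrd_of_anticomm {p : ℕ} [Fact p.Prime] (hp : p ≠ 2)
    (hdiv : ∀ x : ℍ[ℚ_[p], (c₁ : ℚ_[p]), (c₂ : ℚ_[p])], x ≠ 0 → IsUnit x)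
    {u η : ℍ[ℚ, c₁, c₂]} {D N : ℤ} (hD : ¬ (p : ℤ) ∣ D) (hu : u * u = D)
    (hanti : η * u = -(u * η)) (hN : nrd η = N) : (p : ℤ) ∣ N := by
  by_contra hpN
  have hD0 : (D : ℚ) ≠ 0 := Int.cast_ne_zero.2 (by rintro rfl; exact hD (dvd_zero _))
  have hη : η * η = ((-N : ℤ) : ℍ[ℚ, c₁, c₂]) := by
    rw [mul_self_eq_neg_nrd (QuaternionAlgebra.re_eq_zero_of_anticomm hD0
      (by rw [hu, QuaternionAlgebra.coe_intCast]) hanti), hN, Int.cast_neg,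
      QuaternionAlgebra.coe_intCast]
  set f := QuaternionAlgebra.baseChange ℚ_[p] (c₁ := c₁) (c₂ := c₂)
  have hfη : f η = 0 := by
    refine eq_zero_of_anticomm_of_sq_sub_mul_sq_eq hdiv (u := f u) (D := (D : ℚ_[p]))
      (c := ((-N : ℤ) : ℚ_[p])) (by exact_mod_cast hD0) ?_ ?_ ?_
      (Padic.exists_sq_sub_mul_sq_eq hp hD (by rwa [dvd_neg]))
    · rw [← map_mul, hu, map_intCast, map_intCast]
    · rw [← map_mul, hη, map_intCast, map_intCast]
    · rw [← map_mul, hanti, map_neg, map_mul]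
  have hN0 : ((-N : ℤ) : ℍ[ℚ_[p], (c₁ : ℚ_[p]), (c₂ : ℚ_[p])]) = 0 := by
    rw [← map_intCast f, ← hη, map_mul, hfη, zero_mul]
  have : N = 0 := by simpa using congrArg QuaternionAlgebra.re hN0
  exact hpN (this ▸ dvd_zero _)

theorem two_smul_sub_trd_mul_self {α : ℍ[ℚ, c₁, c₂]} {t n : ℤ} (ht : trd α = t)
    (hn : nrd α = n) :
    ((2 : ℚ) • α - algebraMap ℚ _ (trd α)) * ((2 : ℚ) • α - algebraMap ℚ _ (trd α)) =
      ((t ^ 2 - 4 * n : ℤ) : ℍ[ℚ, c₁, c₂]) := by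
  rw [two_smul_sub_mul_self (mul_self_eq_trd_smul_sub_nrd α), ht, hn,
    ← map_intCast (algebraMap ℚ ℍ[ℚ, c₁, c₂]), Int.cast_sub, Int.cast_mul, Int.cast_pow,
    Int.cast_ofNat]

-- At most two orientations: `β` is `α` or its conjugate `ᾱ = t - α`.
theorem eq_or_add_eq_trd_of_trd_nrd_eq {p : ℕ} [Fact p.Prime]
    (hdiv : ∀ x : ℍ[ℚ_[p], (c₁ : ℚ_[p]), (c₂ : ℚ_[p])], x ≠ 0 → IsUnit x)
    (hc₁ : c₁ < 0) (hc₂ : c₂ < 0) {O : Subring ℍ[ℚ, c₁, c₂]} (hO : IsOrder O)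
    {α β : ℍ[ℚ, c₁, c₂]} (hα : α ∈ O) (hβ : β ∈ O) {t n : ℤ} (ht : trd α = t) (hn : nrd α = n)
    (hneg : t ^ 2 - 4 * n < 0) (hsmall : 4 * n - t ^ 2 < p)
    (htβ : trd β = trd α) (hnβ : nrd β = nrd α) :
    β = α ∨ α + β = algebraMap ℚ _ (trd α) := by
  have hαq := mul_self_eq_trd_smul_sub_nrd α
  have hβq : β * β = trd α • β - algebraMap ℚ _ (nrd α) :=
    htβ ▸ hnβ ▸ mul_self_eq_trd_smul_sub_nrd β
  have hfac := mul_sub_mul_eq_sub_mul_add_sub hαq hβq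
  have := noZeroDivisors_of_neg hc₁ hc₂
  by_cases hcomm : α * β = β * α
  · rw [hcomm, sub_self, eq_comm, mul_eq_zero, sub_eq_zero, sub_eq_zero] at hfac
    exact hfac.imp Eq.symm id
  exfalso
  have hz0 : (α - β) * (α + β - algebraMap ℚ _ (trd α)) ≠ 0 := hfac ▸ sub_ne_zero.2 hcomm
  have htO : algebraMap ℚ ℍ[ℚ, c₁, c₂] (trd α) ∈ O := by
    rw [ht, map_intCast]
    exact intCast_mem O t
  obtain ⟨d₁, hd₁⟩ := exists_int_nrd_of_isIntegral (hO.isIntegral (sub_mem hα hβ))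
  obtain ⟨d₂, hd₂⟩ := exists_int_nrd_of_isIntegral (hO.isIntegral (sub_mem (add_mem hα hβ) htO))
  have hd₁pos : 0 < d₁ := by exact_mod_cast hd₁ ▸ nrd_pos hc₁ hc₂ (left_ne_zero_of_mul hz0)
  have hd₂pos : 0 < d₂ := by exact_mod_cast hd₂ ▸ nrd_pos hc₁ hc₂ (right_ne_zero_of_mul hz0)
  have hsum : d₁ + d₂ = 4 * n - t ^ 2 := by
    have := nrd_sub_add_nrd_add_sub htβ hnβ
    rw [hd₁, hd₂, ht, hn] at this
    exact_mod_cast this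
  have hdvd : (p : ℤ) ∣ d₁ * d₂ :=
    dvd_nrd_of_anticomm (ne_two_of_discr_lt hneg hsmall) hdiv (not_dvd_of_discr_lt hneg hsmall)
      (two_smul_sub_trd_mul_self ht hn) (mul_sub_mul_anticomm hαq)
      (by rw [hfac, nrd_mul, hd₁, hd₂, Int.cast_mul])
  rcases (Nat.prime_iff_prime_int.1 Fact.out).dvd_or_dvd hdvd with h | h
  · exact absurd (Int.le_of_dvd hd₁pos h) (by omega)
  · exact absurd (Int.le_of_dvd hd₂pos h) (by omega)

end RationalQuaternions

theorem horizontal_endomorphism_in_image_general (p : ℕ) [Fact p.Prime]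
    (c₁ c₂ : ℚ) (hB : IsBpInfty p c₁ c₂)
    (O : Subring ℍ[ℚ, c₁, c₂]) (hO : IsMaximalOrder O)
    (α : ℍ[ℚ, c₁, c₂]) (t n : ℤ)
    (ht : trd α = (t : ℚ)) (hn : nrd α = (n : ℚ))
    (Δ : ℤ) (hΔ : Δ = t ^ 2 - 4 * n) (hneg : Δ < 0) (hsmall : |Δ| < (p : ℤ))
    (hprim : IsPrimitiveEmbedding O α)
    (ψ : ℍ[ℚ, c₁, c₂]) (hψ : ψ ∈ O)
    (m : ℤ) (hm : nrd ψ = (m : ℚ)) (hmp : ¬ (p : ℤ) ∣ m)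
    (hhor : IsPrimitiveEmbedding O ((nrd ψ)⁻¹ • (ψ * α * star ψ))) :
    ∃ u v : ℤ, ψ = (u : ℚ) • (1 : ℍ[ℚ, c₁, c₂]) + (v : ℚ) • α := by
  obtain ⟨hdivR, hdivP, -⟩ := hB
  obtain ⟨hc₁, hc₂⟩ := neg_of_forall_isUnit_real hdivR
  subst hΔ
  rw [abs_of_neg hneg, neg_sub] at hsmall
  have hψ0 : nrd ψ ≠ 0 := hm ▸ Int.cast_ne_zero.2 (by rintro rfl; exact hmp (dvd_zero _))
  rcases eq_or_add_eq_trd_of_trd_nrd_eq hdivP hc₁ hc₂ hO.1 hprim.1 (β := pushforward ψ α) hhor.1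
    ht hn hneg hsmall (trd_pushforward hψ0 α) (nrd_pushforward hψ0 α) with hβ | hβ
  · have hcomm : α * ψ = ψ * α := by rw [mul_eq_pushforward_mul hψ0, hβ]
    obtain ⟨u, v, huv⟩ := QuaternionAlgebra.exists_eq_smul_one_add_smul_of_commute hc₁.ne hc₂.ne
      (im_ne_zero_of_discr_ne_zero (by rw [ht, hn]; exact_mod_cast hneg.ne)) hcomm
    exact hprim.2 ψ hψ ⟨u, v, huv⟩
  · have hanti : ψ * α = (algebraMap ℚ _ (trd α) - α) * ψ := by
      rw [mul_eq_pushforward_mul hψ0, ← hβ, add_sub_cancel_left]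
    exact absurd (dvd_nrd_of_anticomm (ne_two_of_discr_lt hneg hsmall) hdivP
      (not_dvd_of_discr_lt hneg hsmall) (two_smul_sub_trd_mul_self ht hn)
      (mul_two_smul_sub_anticomm hanti) hm) hmp

/-- Let `𝔒 = ℤ[ω]` be an imaginary quadratic order of discriminant `Δ` with
`|Δ| < p`, let `ι` be a primitive `𝔒`-orientation of the endomorphism ring of a
supersingular elliptic curve — a maximal order `𝒪 ⊂ B_{p,∞}` under the Deuring
correspondence — given by `α = ι(ω) ∈ 𝒪`, and let `ψ ∈ 𝒪` be a horizontal
endomorphism (i.e. the pushforward `ψ_*(ι)`, given by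
`ω ↦ (1/deg ψ)·ψ·α·ψ̄`, is again a primitive `𝔒`-orientation) of degree `deg ψ = nrd ψ`
coprime to `p`.  Then there exists an element of `𝔒` mapping to `ψ`, i.e.
`ψ ∈ ℤ[α] = ι(𝔒)`. -/
theorem horizontal_endomorphism_in_image (p : ℕ) [Fact p.Prime]
    (c₁ c₂ : ℚ) (hB : IsBpInfty p c₁ c₂)
    (O : Subring ℍ[ℚ, c₁, c₂]) (hO : IsMaximalOrder O)
    (α : ℍ[ℚ, c₁, c₂]) (t n : ℤ)
    (ht : trd α = (t : ℚ)) (hn : nrd α = (n : ℚ))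
    (Δ : ℤ) (hΔ : Δ = t ^ 2 - 4 * n) (hneg : Δ < 0) (hsmall : |Δ| < (p : ℤ))
    (hprim : IsPrimitiveEmbedding O α)
    (ψ : ℍ[ℚ, c₁, c₂]) (hψ : ψ ∈ O)
    (m : ℤ) (hm : nrd ψ = (m : ℚ)) (hmpos : 0 < m) (hmp : ¬ (p : ℤ) ∣ m)
    (hhor : IsPrimitiveEmbedding O ((nrd ψ)⁻¹ • (ψ * α * star ψ))) :
    ∃ u v : ℤ, ψ = (u : ℚ) • (1 : ℍ[ℚ, c₁, c₂]) + (v : ℚ) • α :=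
  horizontal_endomorphism_in_image_general p c₁ c₂ hB O hO α t n ht hn Δ hΔ hneg hsmall hprim ψ hψ m
    hm hmp hhor
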